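/- arXiv:1207.1781 — 2 statements merged into one kernel-verified Lean document; each statement's English description precedes it below -/
import Mathlib

section
/- For every ε > 0 there exists N such that for every integer n ≥ N there is a standard set A ⊆ ℤ₂ⁿ (the group (ℤ/2ℤ)ⁿ) with λ(A) < ε and λ±(A) > 1/2 − ε. -/
open scoped Pointwise ComplexOrder

noncomputable section

def IsStandard {G : Type*} [AddCommGroup G] (A : Set G) : Prop :=
  A = -A ∧ (0 : G) ∈ A

def Delta {G : Type*} [AddCommGroup G] (A : Set G) : ℕ :=
  sSup {n | ∃ B : Finset G, ((B : Set G) - (B : Set G)) ∩ A = {0} ∧ B.card = n}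

def DeltaBar {G : Type*} [AddCommGroup G] (A : Set G) : ℕ :=
  sSup {n | ∃ B : Finset G, ((B : Set G) - (B : Set G)) ⊆ A ∧ B.card = n}

def deltaL {G : Type*} [AddCommGroup G] [Fintype G] (A : Set G) : ℝ :=
  (Delta A : ℝ) / (Fintype.card G : ℝ)

def deltaU {G : Type*} [AddCommGroup G] (A : Set G) : ℝ :=
  1 / (DeltaBar A : ℝ)

def ftrans {G : Type*} [AddCommGroup G] [Fintype G] (f : G → ℝ) (γ : AddChar G Circle) : ℂ :=
  ∑ x, (γ x : ℂ) * (f x : ℂ)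

def PosFT {G : Type*} [AddCommGroup G] [Fintype G] (f : G → ℝ) : Prop :=
  ∀ γ : AddChar G Circle, 0 ≤ ftrans f γ

def lamSet {G : Type*} [AddCommGroup G] [Fintype G] (S : Set (G → ℝ)) : Set ℝ :=
  {r | ∃ f ∈ S, PosFT f ∧ (∑ x, f x) ≠ 0 ∧ r = f 0 / ∑ x, f x}

def lam {G : Type*} [AddCommGroup G] [Fintype G] (A : Set G) : ℝ :=
  sInf (lamSet {f | f ≠ 0 ∧ ∀ x ∉ A, f x = 0})

def lamMinus {G : Type*} [AddCommGroup G] [Fintype G] (A : Set G) : ℝ :=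
  sInf (lamSet {f | f ≠ 0 ∧ ∀ x ∉ A, f x ≤ 0})

def lamPlus {G : Type*} [AddCommGroup G] [Fintype G] (A : Set G) : ℝ :=
  sInf (lamSet {f | f ≠ 0 ∧ (∀ x ∉ A, f x = 0) ∧ ∀ x ∈ A, 0 ≤ f x})

def lamPM {G : Type*} [AddCommGroup G] [Fintype G] (A : Set G) : ℝ :=
  sInf (lamSet {f | f ≠ 0 ∧ (∀ x ∉ A, f x ≤ 0) ∧ ∀ x ∈ A, 0 ≤ f x})

/-!
Take `A = {0} ∪ {x : |x| ≥ n - k}` in `(ZMod 2)ⁿ`, `|x|` the Hamming weight, with `k ≈ εn/2`.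

Upper bound for `λ(A)`: if `deg P ≤ k` and `|P| ≤ 1` on `[-n, n - 2]`, the inverse Walsh
transform `f` of `F(y) = 1 + (-1)^|y| P(n - 2|y|) ≥ 0` is positive definite. The constant term
of `F` gives the spike `2ⁿ [x = 0]`; the other term gives `Σ_y P(n - 2|y|) (-1)^((1 + x)·y)`,
which vanishes once `|1 + x| = n - |x| > k`, because `n - 2|y|` is the sum of the weight-one
characters and so `(n - 2|y|)^j` only involves characters of weight `≤ j`. Hence `f` lives on
`A`, `f(0) = 2ⁿ` and `Σ f = 2ⁿ F(0) = 2ⁿ (1 + P(n))`. The rescaled Chebyshev polynomial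
`T_k((t + 1)/(n - 1))` has `P(n) ≥ 1 + 2k²/(n - 1)`, so `λ(A) ≤ n/(2k²) = O(1/(ε²n))`.

Lower bound for `λ±(A)`: for positive definite `g`, the sum of its Fourier coefficients at the
weight-one characters is `Σ (n - 2|x|) g(x) ≥ 0`. Pairing `g` with `n [x = 0] + k + |x| - n`,
which is `≥ 0` on `A` and `< 0` off `A`, gives `g(0) ≥ (1/2 - k/n) Σ g`.
-/

section PositiveDefinite

variable {G : Type*} [AddCommGroup G] [Fintype G]

lemma AddChar.sum_nonneg (ψ : AddChar G ℂ) : 0 ≤ ∑ x, ψ x := by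
  classical
  rw [AddChar.sum_eq_ite]
  split_ifs
  · exact_mod_cast Nat.zero_le _
  · rfl

lemma AddChar.circleEquivComplex_apply (γ : AddChar G Circle) (x : G) :
    AddChar.circleEquivComplex γ x = γ x := rfl

lemma ftrans_circleEquivComplex_symm (f : G → ℝ) (ψ : AddChar G ℂ) :
    ftrans f (AddChar.circleEquivComplex.symm ψ) = ∑ x, ψ x * f x := rfl

lemma PosFT.sum_addChar_mul_nonneg {f : G → ℝ} (hf : PosFT f) (χ : AddChar G ℝ) :
    0 ≤ ∑ x, χ x * f x := by
  have h := hf (AddChar.circleEquivComplex.symm ((algebraMap ℝ ℂ : ℝ →* ℂ).compAddChar χ))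
  rw [ftrans_circleEquivComplex_symm] at h
  exact Complex.zero_le_real.1 (by simpa using h)

lemma PosFT.sum_nonneg {f : G → ℝ} (hf : PosFT f) : 0 ≤ ∑ x, f x := by
  simpa using hf.sum_addChar_mul_nonneg 0

lemma PosFT.apply_zero_nonneg {f : G → ℝ} (hf : PosFT f) : 0 ≤ f 0 := by
  classical
  have h : 0 ≤ ∑ ψ : AddChar G ℂ, ∑ x, ψ x * f x :=
    Finset.sum_nonneg fun ψ _ => ftrans_circleEquivComplex_symm f ψ ▸ hf _
  rw [Finset.sum_comm] at h
  simp_rw [← Finset.sum_mul, AddChar.sum_apply_eq_ite, ite_mul, zero_mul,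
    Finset.sum_ite_eq', Finset.mem_univ, if_true] at h
  have hq : (0 : ℝ) < Fintype.card G := by exact_mod_cast Fintype.card_pos
  exact nonneg_of_mul_nonneg_right (by exact_mod_cast h) hq

lemma posFT_sum_mul_addChar {ι : Type*} [Fintype ι] (χ : ι → AddChar G ℝ) {F : ι → ℝ}
    (hF : ∀ i, 0 ≤ F i) : PosFT fun x => ∑ i, F i * χ i x := by
  intro γ
  have key : ftrans (fun x => ∑ i, F i * χ i x) γ
      = ∑ i, (F i : ℂ) * ∑ x, (AddChar.circleEquivComplex γ *
          (algebraMap ℝ ℂ : ℝ →* ℂ).compAddChar (χ i)) x := by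
    simp only [ftrans, Complex.ofReal_sum, Complex.ofReal_mul, Finset.mul_sum]
    rw [Finset.sum_comm]
    refine Finset.sum_congr rfl fun i _ => Finset.sum_congr rfl fun x _ => ?_
    simp [AddChar.circleEquivComplex_apply]
    ring
  rw [key]
  exact Finset.sum_nonneg fun i _ =>
    mul_nonneg (Complex.zero_le_real.2 (hF i)) (AddChar.sum_nonneg _)

lemma lamSet_bddBelow (S : Set (G → ℝ)) : BddBelow (lamSet S) := by
  refine ⟨0, ?_⟩
  rintro r ⟨f, -, hf, -, rfl⟩
  exact div_nonneg hf.apply_zero_nonneg hf.sum_nonneg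

lemma lam_le {A : Set G} {f : G → ℝ} (hf : f ≠ 0) (hfA : ∀ x ∉ A, f x = 0) (hpos : PosFT f)
    (hsum : ∑ x, f x ≠ 0) : lam A ≤ f 0 / ∑ x, f x :=
  csInf_le (lamSet_bddBelow _) ⟨f, ⟨hf, hfA⟩, hpos, hsum, rfl⟩

lemma le_lamPM {A : Set G} (hA : 0 ∈ A) {c : ℝ}
    (h : ∀ f : G → ℝ, (∀ x ∉ A, f x ≤ 0) → (∀ x ∈ A, 0 ≤ f x) → PosFT f → 0 < ∑ x, f x →
      c * ∑ x, f x ≤ f 0) : c ≤ lamPM A := by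
  classical
  have hsingle : ∑ x, (Pi.single 0 1 : G → ℝ) x = 1 := by simp
  refine le_csInf ⟨1, Pi.single 0 1, ⟨?_, fun x hx => ?_, fun x _ => ?_⟩, fun γ => ?_, ?_, ?_⟩ ?_
  · exact Pi.single_ne_zero_iff.2 one_ne_zero
  · rw [Pi.single_eq_of_ne (ne_of_mem_of_not_mem hA hx).symm]
  · by_cases hx : x = 0 <;> simp [hx]
  · simp [ftrans, Pi.single_apply, apply_ite]
  · simp [hsingle]
  · simp [hsingle]
  · rintro r ⟨f, ⟨-, hneg, hnonneg⟩, hf, hsum, rfl⟩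
    have hpos : 0 < ∑ x, f x := hf.sum_nonneg.lt_of_ne' hsum
    exact (le_div_iff₀ hpos).2 (h f hneg hnonneg hf hpos)

end PositiveDefinite

namespace Polynomial.Chebyshev

lemma mul_le_eval_T_succ_sub_eval_T (k : ℕ) {δ : ℝ} (hδ : 0 ≤ δ) :
    (2 * k + 1) * δ ≤ (T ℝ (k + 1)).eval (1 + δ) - (T ℝ k).eval (1 + δ) := by
  induction k with
  | zero => simp [T_one]
  | succ k ih =>
    have hrec : (T ℝ ((k + 1 : ℕ) + 1)).eval (1 + δ)
        = 2 * (1 + δ) * (T ℝ (k + 1)).eval (1 + δ) - (T ℝ k).eval (1 + δ) := by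
      rw [show ((k + 1 : ℕ) : ℤ) + 1 = k + 2 by push_cast; ring, T_add_two]
      simp
    have hT : 1 ≤ (T ℝ (k + 1)).eval (1 + δ) := one_le_eval_T_real _ (by linarith)
    rw [hrec]
    push_cast at ih ⊢
    nlinarith

lemma one_add_sq_mul_le_eval_T (k : ℕ) {δ : ℝ} (hδ : 0 ≤ δ) :
    1 + k ^ 2 * δ ≤ (T ℝ k).eval (1 + δ) := by
  induction k with
  | zero => simp
  | succ k ih =>
    have := mul_le_eval_T_succ_sub_eval_T k hδ
    push_cast at this ⊢
    nlinarith

end Polynomial.Chebyshev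

section Walsh

variable {ι : Type*} [Fintype ι]

lemma hammingNorm_le_hammingNorm_single_add [DecidableEq ι] {β : Type*} [AddZeroClass β]
    [DecidableEq β] (i : ι) (a : β) (z : ι → β) :
    hammingNorm z ≤ hammingNorm (Pi.single i a + z) + 1 := by
  refine (Finset.card_le_card fun j hj => ?_).trans (Finset.card_insert_le i _)
  by_cases hji : j = i
  · simp [hji]
  · simpa [hji] using hj

lemma hammingNorm_one_add_add_hammingNorm (x : ι → ZMod 2) :
    hammingNorm (1 + x) + hammingNorm x = Fintype.card ι := by
  have h : ∀ i, (1 + x) i ≠ 0 ↔ ¬ x i ≠ 0 := fun i => by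
    simp only [Pi.add_apply, Pi.one_apply]; generalize x i = t; revert t; decide
  simp only [hammingNorm, h]
  rw [add_comm]
  exact Finset.card_filter_add_card_filter_not (fun i => x i ≠ 0)

def walsh (y : ι → ZMod 2) : AddChar (ι → ZMod 2) ℝ :=
  (AddChar.zmodChar 2 (by norm_num : (-1 : ℝ) ^ 2 = 1)).compAddMonoidHom
    (AddMonoidHom.mk' (· ⬝ᵥ y) fun a b => add_dotProduct a b y)

lemma walsh_apply (y x : ι → ZMod 2) : walsh y x = (-1) ^ (x ⬝ᵥ y).val := rfl

lemma walsh_comm (y x : ι → ZMod 2) : walsh y x = walsh x y := by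
  rw [walsh_apply, walsh_apply, dotProduct_comm]

lemma walsh_add (y z x : ι → ZMod 2) : walsh (y + z) x = walsh y x * walsh z x := by
  rw [walsh_comm, AddChar.map_add_eq_mul, walsh_comm, walsh_comm z]

lemma walsh_zero (x : ι → ZMod 2) : walsh 0 x = 1 := by
  simp [walsh_apply]

lemma neg_one_pow_val (t : ZMod 2) : (-1 : ℝ) ^ t.val = if t = 0 then 1 else -1 := by
  obtain rfl | rfl : t = 0 ∨ t = 1 := by revert t; decide
  · simp
  · norm_num [show (1 : ZMod 2) ≠ 0 by decide, ZMod.val_one]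

lemma walsh_single_one [DecidableEq ι] (i : ι) (x : ι → ZMod 2) :
    walsh (Pi.single i 1) x = if x i = 0 then 1 else -1 := by
  rw [walsh_apply, dotProduct_single, mul_one, neg_one_pow_val]

lemma abs_walsh (y x : ι → ZMod 2) : |walsh y x| = 1 := by
  rw [walsh_apply, abs_pow, abs_neg, abs_one, one_pow]

lemma walsh_eq_zero_iff [DecidableEq ι] {y : ι → ZMod 2} : walsh y = 0 ↔ y = 0 := by
  refine ⟨fun h => funext fun i => ?_, fun h => by ext x; simp [h, walsh_zero]⟩
  have := DFunLike.congr_fun h (Pi.single i 1)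
  rw [walsh_comm, walsh_single_one, AddChar.zero_apply] at this
  by_contra hi
  rw [if_neg (by simpa using hi)] at this
  norm_num at this

lemma sum_walsh [DecidableEq ι] (y : ι → ZMod 2) :
    ∑ x, walsh y x = if y = 0 then (Fintype.card (ι → ZMod 2) : ℝ) else 0 := by
  classical
  simp_rw [AddChar.sum_eq_ite, walsh_eq_zero_iff]

lemma sum_walsh_single_one [DecidableEq ι] (x : ι → ZMod 2) :
    ∑ i, walsh (Pi.single i 1) x = Fintype.card ι - 2 * hammingNorm x := by
  have h i : walsh (Pi.single i 1) x = 1 - 2 * if x i ≠ 0 then 1 else 0 := by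
    rw [walsh_single_one]; split_ifs <;> simp_all; norm_num
  simp only [h, Finset.sum_sub_distrib, ← Finset.mul_sum, Finset.sum_boole, Finset.sum_const,
    Finset.card_univ, nsmul_eq_mul, mul_one, hammingNorm]

lemma sum_pow_mul_walsh_eq_zero [DecidableEq ι] {j : ℕ} {z : ι → ZMod 2}
    (hz : j < hammingNorm z) :
    ∑ x, ((Fintype.card ι : ℝ) - 2 * hammingNorm x) ^ j * walsh z x = 0 := by
  induction j generalizing z with
  | zero => simpa [sum_walsh] using hammingNorm_pos_iff.1 hz
  | succ j ih =>
    have hsplit : ∀ x, ((Fintype.card ι : ℝ) - 2 * hammingNorm x) ^ (j + 1) * walsh z x =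
        ∑ i, ((Fintype.card ι : ℝ) - 2 * hammingNorm x) ^ j * walsh (Pi.single i 1 + z) x := by
      intro x
      simp_rw [walsh_add, ← sum_walsh_single_one x, pow_succ, Finset.mul_sum, Finset.sum_mul]
      exact Finset.sum_congr rfl fun i _ => by ring
    rw [Finset.sum_congr rfl fun x _ => hsplit x, Finset.sum_comm]
    refine Finset.sum_eq_zero fun i _ => ih ?_
    have := hammingNorm_le_hammingNorm_single_add i (1 : ZMod 2) z
    omega

lemma sum_eval_mul_walsh_eq_zero [DecidableEq ι] {P : Polynomial ℝ} {z : ι → ZMod 2}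
    (hz : P.natDegree < hammingNorm z) :
    ∑ x, P.eval ((Fintype.card ι : ℝ) - 2 * hammingNorm x) * walsh z x = 0 := by
  simp_rw [Polynomial.eval_eq_sum_range, Finset.sum_mul, mul_assoc]
  rw [Finset.sum_comm]
  refine Finset.sum_eq_zero fun j hj => ?_
  rw [← Finset.mul_sum, sum_pow_mul_walsh_eq_zero (by simp at hj; omega), mul_zero]

lemma sum_sum_mul_walsh [DecidableEq ι] (F : (ι → ZMod 2) → ℝ) :
    ∑ x, ∑ y, F y * walsh y x = Fintype.card (ι → ZMod 2) * F 0 := by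
  rw [Finset.sum_comm]
  simp_rw [← Finset.mul_sum, sum_walsh, mul_ite, mul_zero, Finset.sum_ite_eq', Finset.mem_univ,
    if_true, mul_comm]

end Walsh

section WeightSet

variable {ι : Type*} [Fintype ι]

lemma PosFT.sum_hammingNorm_mul_le [DecidableEq ι] {g : (ι → ZMod 2) → ℝ} (hg : PosFT g) :
    ∑ x, (hammingNorm x : ℝ) * g x ≤ Fintype.card ι / 2 * ∑ x, g x := by
  have h : 0 ≤ ∑ x, ((Fintype.card ι : ℝ) - 2 * hammingNorm x) * g x := by
    simp_rw [← sum_walsh_single_one, Finset.sum_mul]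
    rw [Finset.sum_comm]
    exact Finset.sum_nonneg fun i _ => hg.sum_addChar_mul_nonneg _
  simp only [sub_mul, Finset.sum_sub_distrib, ← Finset.mul_sum, mul_assoc] at h
  linarith

def weightSet (k : ℕ) : Set (ι → ZMod 2) :=
  {x | x = 0 ∨ Fintype.card ι ≤ hammingNorm x + k}

lemma isStandard_weightSet (k : ℕ) : IsStandard (weightSet (ι := ι) k) := by
  refine ⟨?_, Or.inl rfl⟩
  ext x
  rw [Set.mem_neg, show -x = x from funext fun i => ZMod.neg_eq_self_mod_two (x i)]

lemma half_sub_div_le_lamPM_weightSet [DecidableEq ι] (hι : 0 < Fintype.card ι) (k : ℕ) :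
    1 / 2 - k / Fintype.card ι ≤ lamPM (weightSet (ι := ι) k) := by
  refine le_lamPM (Or.inl rfl : (0 : ι → ZMod 2) ∈ weightSet k) fun g hneg hnonneg hg _ => ?_
  have hN : (0 : ℝ) < Fintype.card ι := by exact_mod_cast hι
  have hcoeff x :
      0 ≤ ((Fintype.card ι : ℝ) * (if x = 0 then 1 else 0) + k + hammingNorm x - Fintype.card ι)
        * g x := by
    by_cases hx0 : x = 0
    · subst hx0
      simpa using mul_nonneg (Nat.cast_nonneg k) (hnonneg 0 (Or.inl rfl))
    by_cases hxA : x ∈ weightSet k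
    · have hw : (Fintype.card ι : ℝ) ≤ hammingNorm x + k := by
        exact_mod_cast hxA.resolve_left hx0
      exact mul_nonneg (by simp [hx0]; linarith) (hnonneg x hxA)
    · have hw : (hammingNorm x : ℝ) + k + 1 ≤ Fintype.card ι := by
        have : ¬ (Fintype.card ι ≤ hammingNorm x + k) := fun h => hxA (Or.inr h)
        exact_mod_cast (by omega : hammingNorm x + k + 1 ≤ Fintype.card ι)
      exact mul_nonneg_of_nonpos_of_nonpos (by simp [hx0]; linarith) (hneg x hxA)
  have hsum := Finset.sum_nonneg fun x (_ : x ∈ Finset.univ) => hcoeff x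
  simp only [sub_mul, add_mul, Finset.sum_sub_distrib, Finset.sum_add_distrib, mul_assoc,
    ← Finset.mul_sum, ite_mul, one_mul, zero_mul, Finset.sum_ite_eq', Finset.mem_univ,
    if_true] at hsum
  have hwt := hg.sum_hammingNorm_mul_le
  have h : (1 / 2 - k / Fintype.card ι) * ∑ x, g x
      = ((Fintype.card ι : ℝ) / 2 - k) * (∑ x, g x) / Fintype.card ι := by
    field_simp
  rw [h, div_le_iff₀ hN]
  linarith

lemma abs_eval_sub_two_mul_hammingNorm_le_one {P : Polynomial ℝ}
    (hP : ∀ t ∈ Set.Icc (-(Fintype.card ι : ℝ)) (Fintype.card ι - 2), |P.eval t| ≤ 1)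
    {y : ι → ZMod 2} (hy : y ≠ 0) :
    |P.eval ((Fintype.card ι : ℝ) - 2 * hammingNorm y)| ≤ 1 := by
  have h1 : (1 : ℝ) ≤ hammingNorm y := by exact_mod_cast hammingNorm_pos_iff.2 hy
  have h2 : (hammingNorm y : ℝ) ≤ Fintype.card ι := by
    exact_mod_cast hammingNorm_le_card_fintype
  exact hP _ ⟨by linarith, by linarith⟩

lemma lam_weightSet_le [DecidableEq ι] {k : ℕ} (hk : k < Fintype.card ι) {P : Polynomial ℝ}
    (hdeg : P.natDegree ≤ k)
    (hP : ∀ t ∈ Set.Icc (-(Fintype.card ι : ℝ)) (Fintype.card ι - 2), |P.eval t| ≤ 1)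
    (hPN : -1 < P.eval (Fintype.card ι : ℝ)) :
    lam (weightSet (ι := ι) k) ≤ 1 / (1 + P.eval (Fintype.card ι : ℝ)) := by
  set e : (ι → ZMod 2) → ℝ := fun y => P.eval ((Fintype.card ι : ℝ) - 2 * hammingNorm y)
  set F : (ι → ZMod 2) → ℝ := fun y => 1 + walsh 1 y * e y
  set f : (ι → ZMod 2) → ℝ := fun x => ∑ y, F y * walsh y x
  have hF0 : F 0 = 1 + P.eval (Fintype.card ι : ℝ) := by simp [F, e, walsh_comm 1 0, walsh_zero]
  have hF y : 0 ≤ F y := by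
    rcases eq_or_ne y 0 with rfl | hy
    · rw [hF0]; linarith
    · have h : |walsh 1 y * e y| ≤ 1 := by
        rw [abs_mul, abs_walsh, one_mul]; exact abs_eval_sub_two_mul_hammingNorm_le_one hP hy
      linarith [(abs_le.1 h).1]
  have hf x : f x = ∑ y, walsh x y + ∑ y, e y * walsh (1 + x) y := by
    rw [← Finset.sum_add_distrib]
    refine Finset.sum_congr rfl fun y _ => ?_
    simp only [F, walsh_add, walsh_comm y x]
    ring
  have hhigh {x : ι → ZMod 2} (hx : hammingNorm x + k < Fintype.card ι) :
      ∑ y, e y * walsh (1 + x) y = 0 :=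
    sum_eval_mul_walsh_eq_zero (by have := hammingNorm_one_add_add_hammingNorm x; omega)
  have hf0 : f 0 = Fintype.card (ι → ZMod 2) := by
    rw [hf, hhigh (by simpa using hk), sum_walsh, if_pos rfl, add_zero]
  have hfA x (hx : x ∉ weightSet k) : f x = 0 := by
    simp only [weightSet, Set.mem_ofPred_eq, not_or, not_le] at hx
    rw [hf, hhigh hx.2, sum_walsh, if_neg hx.1, add_zero]
  have hsum : ∑ x, f x = Fintype.card (ι → ZMod 2) * (1 + P.eval (Fintype.card ι : ℝ)) := by
    rw [sum_sum_mul_walsh, hF0]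
  have hq : (0 : ℝ) < Fintype.card (ι → ZMod 2) := by exact_mod_cast Fintype.card_pos
  calc lam (weightSet k) ≤ f 0 / ∑ x, f x :=
        lam_le (fun h => by simpa [hf0, hq.ne'] using congr_fun h 0) hfA
          (posFT_sum_mul_addChar walsh hF) (by rw [hsum]; exact (mul_pos hq (by linarith)).ne')
    _ = 1 / (1 + P.eval (Fintype.card ι : ℝ)) := by
        rw [hf0, hsum]; field_simp

open Polynomial in
lemma lam_weightSet_le_div [DecidableEq ι] {k : ℕ} (hk0 : 0 < k)
    (hk : k < Fintype.card ι) :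
    lam (weightSet (ι := ι) k) ≤ Fintype.card ι / (2 * k ^ 2) := by
  set N : ℝ := (Fintype.card ι : ℝ) with hN
  have hN2 : 2 ≤ N := by rw [hN]; exact_mod_cast (by omega : 2 ≤ Fintype.card ι)
  have hN1 : 0 < N - 1 := by linarith
  have hk0' : (0 : ℝ) < k := by exact_mod_cast hk0
  -- rescale `[-1, 1]` to the range `[-N, N - 2]` of `N - 2|y|` on `y ≠ 0`
  set Q : ℝ[X] := (Chebyshev.T ℝ k).comp (C (N - 1)⁻¹ * (X + 1))
  have hQ t : Q.eval t = (Chebyshev.T ℝ k).eval ((t + 1) / (N - 1)) := by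
    simp [Q, div_eq_inv_mul]
  have hdeg : Q.natDegree ≤ k := by
    rw [natDegree_comp, Chebyshev.natDegree_T, Int.natAbs_natCast]
    refine (Nat.mul_le_mul_left k ((natDegree_C_mul_le _ _).trans ?_)).trans (mul_one k).le
    exact (natDegree_X_add_C 1).le
  have hbound : ∀ t ∈ Set.Icc (-N) (N - 2), |Q.eval t| ≤ 1 := by
    rintro t ⟨ht1, ht2⟩
    rw [hQ]
    refine Chebyshev.abs_eval_T_real_le_one _ (abs_le.2 ⟨?_, ?_⟩)
    · rw [le_div_iff₀ (by linarith)]; linarith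
    · rw [div_le_iff₀ (by linarith)]; linarith
  have hgrowth : 1 + 2 * k ^ 2 / (N - 1) ≤ Q.eval N := by
    have h := Chebyshev.one_add_sq_mul_le_eval_T k (div_nonneg zero_le_two hN1.le)
    rw [hQ, show (N + 1) / (N - 1) = 1 + 2 / (N - 1) by field_simp; ring]
    convert h using 2
    ring
  have hdiv : 2 * k ^ 2 / N ≤ 2 * k ^ 2 / (N - 1) :=
    div_le_div_of_nonneg_left (by positivity) hN1 (by linarith)
  have hpos : 0 < 2 * k ^ 2 / N := div_pos (by positivity) (by linarith)
  calc lam (weightSet k) ≤ 1 / (1 + Q.eval N) :=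
        lam_weightSet_le hk hdeg hbound (by rw [← hN]; linarith)
    _ ≤ 1 / (2 * k ^ 2 / N) := one_div_le_one_div_of_le hpos (by linarith)
    _ = N / (2 * k ^ 2) := one_div_div _ _

end WeightSet

lemma eventually_exists_weight {ε : ℝ} (hε : 0 < ε) :
    ∀ᶠ n : ℕ in Filter.atTop,
      ∃ k : ℕ, 0 < k ∧ k < n ∧ (k : ℝ) / n < ε ∧ (n : ℝ) / (2 * k ^ 2) < ε := by
  set δ := min ε 1
  have hδ : 0 < δ := lt_min hε one_pos
  have hδ1 : δ ≤ 1 := min_le_right _ _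
  have hδε : δ ≤ ε := min_le_left _ _
  refine Filter.eventually_atTop.2 ⟨⌈8 / δ ^ 3⌉₊ + 1, fun n hn => ?_⟩
  have hn : 8 < δ ^ 3 * n := by
    have : 8 / δ ^ 3 < n := by
      calc 8 / δ ^ 3 ≤ ⌈8 / δ ^ 3⌉₊ := Nat.le_ceil _
        _ < n := by exact_mod_cast hn
    rwa [div_lt_iff₀ (by positivity), mul_comm] at this
  have hδn : 8 < δ * n := by
    have : δ ^ 3 * n ≤ δ * n := by
      gcongr
      calc δ ^ 3 ≤ δ ^ 1 := pow_le_pow_of_le_one hδ.le hδ1 (by norm_num)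
        _ = δ := pow_one δ
    linarith
  have hk1 : (⌊δ * n / 2⌋₊ : ℝ) ≤ δ * n / 2 := Nat.floor_le (by positivity)
  have hk2 : δ * n / 2 - 1 < ⌊δ * n / 2⌋₊ := Nat.sub_one_lt_floor _
  have hn0 : (0 : ℝ) < n := by nlinarith
  have hk : δ * n / 4 ≤ ⌊δ * n / 2⌋₊ := by linarith
  refine ⟨⌊δ * n / 2⌋₊, Nat.floor_pos.2 (by linarith), ?_, ?_, ?_⟩
  · have : (⌊δ * n / 2⌋₊ : ℝ) < n := by nlinarith
    exact_mod_cast this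
  · rw [div_lt_iff₀ hn0]
    nlinarith
  · rw [div_lt_iff₀ (mul_pos two_pos (pow_pos (by linarith) 2))]
    calc (n : ℝ) < δ ^ 3 * n * n / 8 := by nlinarith
      _ = δ * (2 * (δ * n / 4) ^ 2) := by ring
      _ ≤ ε * (2 * ⌊δ * n / 2⌋₊ ^ 2) := by gcongr

theorem stmt4 (ε : ℝ) (hε : 0 < ε) :
    ∃ N : ℕ, ∀ n : ℕ, N ≤ n →
      ∃ A : Set (Fin n → ZMod 2), IsStandard A ∧
        lam A < ε ∧ 1 / 2 - ε < lamPM A := by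
  obtain ⟨N, hN⟩ := Filter.eventually_atTop.1 (eventually_exists_weight hε)
  refine ⟨N, fun n hn => ?_⟩
  obtain ⟨k, hk0, hkn, hkε, hεk⟩ := hN n hn
  refine ⟨weightSet k, isStandard_weightSet k, ?_, ?_⟩
  · calc lam (weightSet k) ≤ n / (2 * k ^ 2) := by
          simpa using lam_weightSet_le_div (ι := Fin n) hk0 (by simpa using hkn)
      _ < ε := hεk
  · calc 1 / 2 - ε < 1 / 2 - k / n := by linarith
      _ ≤ lamPM (weightSet k) := by
          simpa using half_sub_div_le_lamPM_weightSet (ι := Fin n) (by simpa using hk0.trans hkn) k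
end
end

section
/- Let G be a finite commutative group, H a subgroup, and G₁ = G/H. Let A ⊆ G be a standard set, A_H = A ∩ H (a standard set in H), and A₁ = A/H = {a + H : a ∈ A} (a standard set in G₁). Then δ(A) ≥ δ(A_H) · δ(A₁) and δ̄(A) ≥ δ̄(A_H) · δ̄(A₁); equivalently, Δ(A) ≥ Δ(A_H) · Δ(A₁) and Δ̄(A) ≤ Δ̄(A_H) · Δ̄(A₁), where the quantities for A_H and A₁ are computed in the groups H and G₁ respectively. -/
open scoped Pointwise ComplexOrder

noncomputable section

section helpers
variable {G : Type*} [AddCommGroup G] [Fintype G]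

lemma Dbdd (A : Set G) : BddAbove {n | ∃ B : Finset G, ((B : Set G) - (B : Set G)) ∩ A = {0} ∧ B.card = n} :=
  ⟨Fintype.card G, fun _ ⟨B, _, hc⟩ => hc ▸ B.card_le_univ⟩

lemma DBbdd (A : Set G) : BddAbove {n | ∃ B : Finset G, ((B : Set G) - (B : Set G)) ⊆ A ∧ B.card = n} :=
  ⟨Fintype.card G, fun _ ⟨B, _, hc⟩ => hc ▸ B.card_le_univ⟩

lemma le_Delta (A : Set G) (B : Finset G)
    (hB : ((B : Set G) - (B : Set G)) ∩ A = {0}) : B.card ≤ Delta A :=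
  le_csSup (Dbdd A) ⟨B, hB, rfl⟩

lemma le_DeltaBar (A : Set G) (B : Finset G)
    (hB : ((B : Set G) - (B : Set G)) ⊆ A) : B.card ≤ DeltaBar A :=
  le_csSup (DBbdd A) ⟨B, hB, rfl⟩

lemma Delta_exists (A : Set G) (h0 : (0:G) ∈ A) :
    ∃ B : Finset G, ((B : Set G) - (B : Set G)) ∩ A = {0} ∧ B.card = Delta A := by
  have hne : ({n | ∃ B : Finset G, ((B : Set G) - (B : Set G)) ∩ A = {0} ∧ B.card = n}).Nonempty := by
    refine ⟨1, ({0} : Finset G), ?_, by simp⟩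
    simp only [Finset.coe_singleton]
    rw [Set.singleton_sub_singleton, sub_zero]
    exact Set.inter_eq_self_of_subset_left (by simpa using h0)
  exact Nat.sSup_mem hne (Dbdd A)

lemma DeltaBar_exists (A : Set G) :
    ∃ B : Finset G, ((B : Set G) - (B : Set G)) ⊆ A ∧ B.card = DeltaBar A := by
  have hne : ({n | ∃ B : Finset G, ((B : Set G) - (B : Set G)) ⊆ A ∧ B.card = n}).Nonempty :=
    ⟨0, ∅, by simp, by simp⟩
  exact Nat.sSup_mem hne (DBbdd A)

lemma one_le_DeltaBar (A : Set G) (h0 : (0:G) ∈ A) : 1 ≤ DeltaBar A := by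
  have := le_DeltaBar A {0} (by
    simp only [Finset.coe_singleton]
    rw [Set.singleton_sub_singleton, sub_zero]
    simpa using h0)
  simpa using this

end helpers

theorem key12 {G : Type*} [AddCommGroup G] [Fintype G]
    (H : AddSubgroup G) [Fintype H] [Fintype (G ⧸ H)]
    (A : Set G) (hA0 : (0:G) ∈ A)
    (AH : Set H) (hAH : AH = Subtype.val ⁻¹' A)
    (A₁ : Set (G ⧸ H)) (hA₁ : A₁ = (QuotientAddGroup.mk : G → G ⧸ H) '' A) :
    Delta AH * Delta A₁ ≤ Delta A ∧
    DeltaBar A ≤ DeltaBar AH * DeltaBar A₁ := by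
  classical
  have h0H : (0:H) ∈ AH := by rw [hAH]; simpa using hA0
  have h0Q : (0:G⧸H) ∈ A₁ := by rw [hA₁]; exact ⟨0, hA0, rfl⟩
  constructor
  · -- key1
    obtain ⟨BH, hBH, hBHcard⟩ := Delta_exists AH h0H
    obtain ⟨B₁, hB₁, hB₁card⟩ := Delta_exists A₁ h0Q
    set f : H × (G⧸H) → G := fun p => (p.1 : G) + p.2.out with hf_def
    have hf : Function.Injective f := by
      rintro ⟨b, c⟩ ⟨b', c'⟩ h
      simp only [hf_def] at h
      have hc : c = c' := by
        have h2 := congrArg (QuotientAddGroup.mk (s := H)) h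
        simpa [QuotientAddGroup.mk_add, QuotientAddGroup.out_eq',
          (QuotientAddGroup.eq_zero_iff (b:G)).mpr b.2,
          (QuotientAddGroup.eq_zero_iff (b':G)).mpr b'.2] using h2
      subst hc
      have : (b : G) = b' := by
        exact add_right_cancel h
      exact Prod.ext (Subtype.ext this) rfl
    set B : Finset G := (BH ×ˢ B₁).image f with hB_def
    have hBcard : B.card = BH.card * B₁.card := by
      rw [hB_def, Finset.card_image_of_injective _ hf, Finset.card_product]
    have hmemB : ∀ x, x ∈ B ↔ ∃ b ∈ BH, ∃ c ∈ B₁, (b:G) + c.out = x := by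
      intro x
      simp only [hB_def, Finset.mem_image, Finset.mem_product, hf_def, Prod.exists]
      constructor
      · rintro ⟨b, c, ⟨hb, hc⟩, rfl⟩; exact ⟨b, hb, c, hc, rfl⟩
      · rintro ⟨b, hb, c, hc, rfl⟩; exact ⟨b, c, ⟨hb, hc⟩, rfl⟩
    have hBprop : ((B : Set G) - (B : Set G)) ∩ A = {0} := by
      -- nonemptiness pieces
      have h0BH : (0:H) ∈ ((BH : Set H) - (BH : Set H)) ∩ AH := by
        rw [hBH]; rfl
      obtain ⟨bH, hbH, -⟩ : ∃ u ∈ BH, ∃ v ∈ BH, (u:H) - v = 0 := by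
        obtain ⟨u, hu, v, hv, huv⟩ := h0BH.1
        exact ⟨u, hu, v, hv, huv⟩
      have h0B₁ : (0:G⧸H) ∈ ((B₁ : Set (G⧸H)) - (B₁ : Set (G⧸H))) ∩ A₁ := by
        rw [hB₁]; rfl
      obtain ⟨b₁, hb₁, -⟩ : ∃ u ∈ B₁, ∃ v ∈ B₁, (u:G⧸H) - v = 0 := by
        obtain ⟨u, hu, v, hv, huv⟩ := h0B₁.1
        exact ⟨u, hu, v, hv, huv⟩
      ext x
      simp only [Set.mem_inter_iff, Set.mem_sub, Set.mem_singleton_iff]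
      constructor
      · rintro ⟨⟨u, hu, v, hv, rfl⟩, hxA⟩
        rw [Finset.mem_coe, hmemB] at hu hv
        obtain ⟨b, hb, c, hc, rfl⟩ := hu
        obtain ⟨b', hb', c', hc', rfl⟩ := hv
        have hc0 : c - c' = 0 := by
          have hmem1 : c - c' ∈ ((B₁ : Set (G⧸H)) - (B₁ : Set (G⧸H))) ∩ A₁ := by
            constructor
            · exact ⟨c, hc, c', hc', rfl⟩
            · rw [hA₁]
              refine ⟨_, hxA, ?_⟩
              simp [QuotientAddGroup.mk_add, QuotientAddGroup.mk_sub, QuotientAddGroup.out_eq',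
                (QuotientAddGroup.eq_zero_iff (b:G)).mpr b.2,
                (QuotientAddGroup.eq_zero_iff (b':G)).mpr b'.2]
          rw [hB₁] at hmem1
          exact hmem1
        have hcc : c = c' := by rwa [sub_eq_zero] at hc0
        subst hcc
        have hx : (b:G) + c.out - ((b':G) + c.out) = ((b - b' : H) : G) := by
          push_cast
          exact add_sub_add_right_eq_sub _ _ _
        have hb0 : b - b' = 0 := by
          have hmem2 : b - b' ∈ ((BH : Set H) - (BH : Set H)) ∩ AH := by
            refine ⟨⟨b, hb, b', hb', rfl⟩, ?_⟩
            rw [hAH]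
            simp only [Set.mem_preimage]
            rw [← hx]; exact hxA
          rw [hBH] at hmem2
          exact hmem2
        rw [hx, hb0]; simp
      · rintro rfl
        refine ⟨⟨(bH:G) + b₁.out, ?_, (bH:G) + b₁.out, ?_, sub_self _⟩, hA0⟩ <;>
          · rw [Finset.mem_coe, hmemB]; exact ⟨bH, hbH, b₁, hb₁, rfl⟩
    calc Delta AH * Delta A₁ = B.card := by rw [hBcard, hBHcard, hB₁card]
      _ ≤ Delta A := le_Delta A B hBprop
  · -- key2
    obtain ⟨B, hB, hBcard⟩ := DeltaBar_exists A
    rw [← hBcard]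
    set B₁ : Finset (G⧸H) := B.image (QuotientAddGroup.mk) with hB₁_def
    have hB₁ : ((B₁ : Set (G⧸H)) - (B₁ : Set (G⧸H))) ⊆ A₁ := by
      rintro z ⟨u, hu, v, hv, rfl⟩
      rw [Finset.mem_coe, hB₁_def, Finset.mem_image] at hu hv
      obtain ⟨x, hx, rfl⟩ := hu
      obtain ⟨y, hy, rfl⟩ := hv
      rw [hA₁]
      exact ⟨x - y, hB ⟨x, hx, y, hy, rfl⟩, by simp [QuotientAddGroup.mk_sub]⟩
    have hB₁card : B₁.card ≤ DeltaBar A₁ := le_DeltaBar _ _ hB₁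
    have hfiber : ∀ c ∈ B₁,
        (B.filter (fun x => (QuotientAddGroup.mk x : G⧸H) = c)).card ≤ DeltaBar AH := by
      intro c _
      set F := B.filter (fun x => (QuotientAddGroup.mk x : G⧸H) = c) with hF_def
      rcases F.eq_empty_or_nonempty with hF | ⟨x₀, hx₀⟩
      · simp [hF]
      · have hx₀c : (QuotientAddGroup.mk x₀ : G⧸H) = c := (Finset.mem_filter.mp hx₀).2
        have hmemH : ∀ x ∈ F, x - x₀ ∈ H := by
          intro x hx
          have hxc : (QuotientAddGroup.mk x : G⧸H) = c := (Finset.mem_filter.mp hx).2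
          have : (QuotientAddGroup.mk x : G⧸H) = QuotientAddGroup.mk x₀ := by rw [hxc, hx₀c]
          exact (QuotientAddGroup.eq_iff_sub_mem).mp this
        set g : {x // x ∈ F} → H := fun x => ⟨x.1 - x₀, hmemH x.1 x.2⟩ with hg_def
        have hg : Function.Injective g := by
          rintro ⟨x, hx⟩ ⟨y, hy⟩ h
          have hxy : x - x₀ = y - x₀ := congrArg Subtype.val h
          exact Subtype.ext (sub_left_inj.mp hxy)
        set BH : Finset H := F.attach.image g with hBH_def
        have hBHcard : BH.card = F.card := by
          rw [hBH_def, Finset.card_image_of_injective _ hg, Finset.card_attach]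
        have hBHsub : ((BH : Set H) - (BH : Set H)) ⊆ AH := by
          rintro z ⟨u, hu, v, hv, rfl⟩
          rw [Finset.mem_coe, hBH_def, Finset.mem_image] at hu hv
          obtain ⟨⟨x, hx⟩, -, rfl⟩ := hu
          obtain ⟨⟨y, hy⟩, -, rfl⟩ := hv
          rw [hAH]
          simp only [Set.mem_preimage, hg_def, AddSubgroup.coe_sub]
          rw [sub_sub_sub_cancel_right]
          exact hB ⟨x, Finset.mem_coe.mpr (Finset.mem_filter.mp hx).1, y,
            Finset.mem_coe.mpr (Finset.mem_filter.mp hy).1, rfl⟩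
        calc F.card = BH.card := hBHcard.symm
          _ ≤ DeltaBar AH := le_DeltaBar _ _ hBHsub
    calc B.card = ∑ c ∈ B₁, (B.filter fun x => (QuotientAddGroup.mk x : G⧸H) = c).card :=
          Finset.card_eq_sum_card_fiberwise (fun x hx => Finset.mem_image_of_mem _ hx)
      _ ≤ ∑ _c ∈ B₁, DeltaBar AH := Finset.sum_le_sum hfiber
      _ = B₁.card * DeltaBar AH := by rw [Finset.sum_const, smul_eq_mul]
      _ ≤ DeltaBar A₁ * DeltaBar AH := Nat.mul_le_mul_right _ hB₁card
      _ = DeltaBar AH * DeltaBar A₁ := mul_comm _ _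

theorem stmt14 {G : Type*} [AddCommGroup G] [Fintype G]
    (H : AddSubgroup G) [Fintype H] [Fintype (G ⧸ H)]
    (A : Set G) (hA : IsStandard A)
    (AH : Set H) (hAH : AH = Subtype.val ⁻¹' A)
    (A₁ : Set (G ⧸ H)) (hA₁ : A₁ = (QuotientAddGroup.mk : G → G ⧸ H) '' A) :
    deltaL AH * deltaL A₁ ≤ deltaL A ∧
    deltaU AH * deltaU A₁ ≤ deltaU A ∧
    Delta AH * Delta A₁ ≤ Delta A ∧
    DeltaBar A ≤ DeltaBar AH * DeltaBar A₁ := by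
  obtain ⟨-, hA0⟩ := hA
  have h0H : (0:H) ∈ AH := by rw [hAH]; simpa using hA0
  obtain ⟨key1, key2⟩ := key12 H A hA0 AH hAH A₁ hA₁
  have hDA : (0:ℝ) < (DeltaBar A : ℝ) := by
    exact_mod_cast Nat.lt_of_lt_of_le Nat.zero_lt_one (one_le_DeltaBar A hA0)
  refine ⟨?_, ?_, key1, key2⟩
  · unfold deltaL
    have hcard : ((Fintype.card H : ℝ)) * (Fintype.card (G ⧸ H) : ℝ) = (Fintype.card G : ℝ) := by
      have h := AddSubgroup.card_eq_card_quotient_mul_card_addSubgroup H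
      simp only [Nat.card_eq_fintype_card] at h
      rw [← Nat.cast_mul, mul_comm, ← h]
    rw [div_mul_div_comm, hcard]
    have hpos : (0:ℝ) < (Fintype.card G : ℝ) := by exact_mod_cast Fintype.card_pos
    rw [div_le_div_iff₀ hpos hpos]
    have : ((Delta AH : ℝ) * (Delta A₁ : ℝ)) ≤ (Delta A : ℝ) := by exact_mod_cast key1
    nlinarith
  · unfold deltaU
    rw [div_mul_div_comm, one_mul, ← Nat.cast_mul]
    apply one_div_le_one_div_of_le hDA
    exact_mod_cast key2
end
end
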